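/- Let φ ∈ X + X²ℂ[[X]] and ν ∈ ℂ with ν ≠ 0. For α ∈ ℂ write exp(α·φ) := Σ_{k≥0} αᵏφᵏ/k! ∈ ℂ[[X]] (well-defined since φ has zero constant term). Suppose h ∈ X + X²ℂ[[X]] is the compositional inverse of X·exp(−φ) (i.e. (X·exp(−φ))∘h = X) and that h = h'·X·exp((1/ν)·(φ∘(−νX))) holds (i.e. φ solves 𝔗Q(X·e^{−φ(X)}) = X·e^{(1/ν)φ(−νX)}). Let p_n(α) := n!·coeff_n(exp(α·φ)) be the associated polynomials of binomial type. Then for every n ∈ ℕ: (−ν)ⁿ·p_n(−1/ν) = p_n(n), i.e. (−ν)ⁿ·coeff_n(exp(−(1/ν)·φ)) = coeff_n(exp(n·φ)). -/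

import Mathlib

/-!
Put `w = X / h`. The hypothesis `hinv` says `exp(-φ) ∘ h = w`, hence `exp(nφ) ∘ h = w⁻ⁿ`,
and `heq` says `w h' = exp(-φ(-νX)/ν)`. Lagrange inversion in the form
`[Xⁿ] A = [Xⁿ] ((A ∘ h) · wⁿ⁺¹ h')`, which comes from `[X⁻¹] h' / h ^ (j + 1) = δ_{j,0}`,
gives `[Xⁿ] exp(nφ) = [Xⁿ] (w h') = (-ν)ⁿ [Xⁿ] exp(-φ/ν)`.
-/

open PowerSeries Finset

/-- Composition `f ∘ g` of formal power series (intended for `g` with zero constant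
term). -/
noncomputable def pcomp (f g : PowerSeries ℂ) : PowerSeries ℂ :=
  PowerSeries.mk fun n => ∑ k ∈ range (n + 1), coeff k f * coeff n (g ^ k)

/-- Formal exponential `exp(u) = Σ_{k≥0} uᵏ/k!` of a power series `u` with zero
constant term. -/
noncomputable def pexp (u : PowerSeries ℂ) : PowerSeries ℂ :=
  pcomp (PowerSeries.exp ℂ) u

namespace PowerSeries

section Substitution

variable {R : Type*} [CommRing R] {g : R⟦X⟧}

theorem coeff_pow_eq_zero_of_lt (hg : constantCoeff g = 0) {n k : ℕ} (hnk : n < k) :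
    coeff n (g ^ k) = 0 :=
  coeff_of_lt_order _ <|
    (Nat.cast_lt.mpr hnk).trans_le (le_order_pow_of_constantCoeff_eq_zero k hg)

theorem coeff_subst_eq_sum_range (hg : constantCoeff g = 0) (f : R⟦X⟧) {n N : ℕ}
    (hnN : n ≤ N) :
    coeff n (f.subst g) = ∑ k ∈ range (N + 1), coeff k f * coeff n (g ^ k) := by
  simp only [coeff_subst' (HasSubst.of_constantCoeff_zero' hg), smul_eq_mul]
  refine finsum_eq_sum_of_support_subset _ fun k hk => ?_
  rw [coe_range, Set.mem_Iio]
  by_contra! hNk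
  exact hk <| show coeff k f * coeff n (g ^ k) = 0 by
    rw [coeff_pow_eq_zero_of_lt hg (by omega), mul_zero]

theorem coeff_subst_mul (hg : constantCoeff g = 0) (f M : R⟦X⟧) (n : ℕ) :
    coeff n (f.subst g * M) = ∑ k ∈ range (n + 1), coeff k f * coeff n (g ^ k * M) := by
  calc coeff n (f.subst g * M)
      = ∑ p ∈ antidiagonal n, ∑ k ∈ range (n + 1),
          coeff k f * (coeff p.1 (g ^ k) * coeff p.2 M) := by
        rw [coeff_mul]
        refine sum_congr rfl fun p hp => ?_
        rw [coeff_subst_eq_sum_range hg f (HasAntidiagonal.antidiagonal.fst_le hp), sum_mul]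
        simp only [mul_assoc]
    _ = _ := by
        rw [sum_comm]
        simp only [coeff_mul, mul_sum]

@[simp]
theorem constantCoeff_rescale (r : R) (f : R⟦X⟧) :
    constantCoeff (rescale r f) = constantCoeff f := by
  rw [← coeff_zero_eq_constantCoeff_apply, coeff_rescale, pow_zero, one_mul,
    coeff_zero_eq_constantCoeff_apply]

theorem rescale_C (r a : R) : rescale r (C a) = C a := by
  ext n
  rcases n with _ | n <;> simp [coeff_C]

theorem rescale_subst (hg : constantCoeff g = 0) (f : R⟦X⟧) (r : R) :
    rescale r (f.subst g) = f.subst (rescale r g) := by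
  rw [rescale_eq_subst, rescale_eq_subst r g,
    subst_comp_subst_apply (HasSubst.of_constantCoeff_zero' hg) (HasSubst.smul_X' r)]

end Substitution

section Lagrange

variable {K : Type*} [Field K] {h w : K⟦X⟧}

theorem exists_mul_eq_X (hh0 : constantCoeff h = 0) (hh1 : coeff 1 h = 1) :
    ∃ w, h * w = X := by
  obtain ⟨v, rfl⟩ := X_dvd_iff.mpr hh0
  have hv : constantCoeff v ≠ 0 := by
    rw [← coeff_zero_eq_constantCoeff_apply, ← coeff_succ_X_mul, hh1]
    exact one_ne_zero
  exact ⟨v⁻¹, by rw [mul_assoc, PowerSeries.mul_inv_cancel v hv, mul_one]⟩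

/-- With `w = X / h`, the residue of `h' / h ^ (j + 1)` is `δ_{j,0}`. -/
theorem coeff_pow_succ_mul_derivative [CharZero K] (hh0 : constantCoeff h = 0)
    (hw : h * w = X) (j : ℕ) :
    coeff j (w ^ (j + 1) * d⁄dX K h) = if j = 0 then 1 else 0 := by
  have hder : w * d⁄dX K h + h * d⁄dX K w = 1 := by
    have := congrArg (d⁄dX K) hw
    rw [Derivation.leibniz, derivative_X, smul_eq_mul, smul_eq_mul] at this
    linear_combination this
  rcases j with _ | m
  · have := congrArg constantCoeff hder
    rw [map_add, map_mul constantCoeff h, hh0, zero_mul, add_zero, map_one] at this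
    simpa using this
  · -- the two coefficients left after `hsplit` agree because `(w ^ (m + 1))' = (m + 1) w ^ m w'`
    have hsplit : w ^ (m + 1 + 1) * d⁄dX K h = w ^ (m + 1) - X * (w ^ m * d⁄dX K w) := by
      linear_combination w ^ (m + 1) * hder - w ^ m * d⁄dX K w * hw
    have hpow := coeff_derivative (w ^ (m + 1)) m
    rw [Derivation.leibniz_pow, Nat.add_sub_cancel, smul_eq_mul, map_nsmul, nsmul_eq_mul,
      Nat.cast_succ] at hpow
    have hm : (m : K) + 1 ≠ 0 := Nat.cast_add_one_ne_zero m
    rw [hsplit, map_sub, coeff_succ_X_mul, if_neg m.succ_ne_zero, sub_eq_zero]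
    exact mul_left_cancel₀ hm (hpow.trans (mul_comm _ _)).symm

theorem coeff_subst_mul_pow_succ_mul_derivative [CharZero K] (hh0 : constantCoeff h = 0)
    (hw : h * w = X) (A : K⟦X⟧) (n : ℕ) :
    coeff n (A.subst h * (w ^ (n + 1) * d⁄dX K h)) = coeff n A := by
  have hterm : ∀ k ∈ range (n + 1),
      coeff n (h ^ k * (w ^ (n + 1) * d⁄dX K h)) = if k = n then 1 else 0 := by
    intro k hk
    obtain ⟨j, rfl⟩ := Nat.exists_eq_add_of_le (Nat.lt_succ_iff.mp (mem_range.mp hk))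
    have hX : h ^ k * (w ^ (k + j + 1) * d⁄dX K h) = X ^ k * (w ^ (j + 1) * d⁄dX K h) := by
      rw [← hw]
      ring
    rw [hX, coeff_X_pow_mul', if_pos (Nat.le_add_right k j), Nat.add_sub_cancel_left,
      coeff_pow_succ_mul_derivative hh0 hw]
    simp
  rw [coeff_subst_mul hh0, sum_congr rfl fun k hk => by rw [hterm k hk]]
  simp

theorem coeff_eq_coeff_mul_derivative_of_subst_mul_pow_eq_one [CharZero K]
    (hh0 : constantCoeff h = 0) (hw : h * w = X) {A : K⟦X⟧} {n : ℕ}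
    (hA : A.subst h * w ^ n = 1) :
    coeff n A = coeff n (w * d⁄dX K h) := by
  rw [← coeff_subst_mul_pow_succ_mul_derivative hh0 hw A n,
    show A.subst h * (w ^ (n + 1) * d⁄dX K h) = A.subst h * w ^ n * (w * d⁄dX K h) by ring,
    hA, one_mul]

theorem mul_derivative_mul_eq_one_of_eq_derivative_mul {E : K⟦X⟧} (hw : h * w = X)
    (hE : h = d⁄dX K h * (X * E)) :
    w * d⁄dX K h * E = 1 := by
  refine mul_left_cancel₀ (X_ne_zero (R := K)) ?_
  calc X * (w * d⁄dX K h * E) = d⁄dX K h * (X * E) * w := by ring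
    _ = X * 1 := by rw [← hE, hw, mul_one]

end Lagrange

end PowerSeries

section Exponential

variable {φ : ℂ⟦X⟧}

theorem pcomp_eq_subst {g : ℂ⟦X⟧} (hg : constantCoeff g = 0) (f : ℂ⟦X⟧) :
    pcomp f g = f.subst g := by
  ext n
  rw [pcomp, coeff_mk, coeff_subst_eq_sum_range hg f le_rfl]

theorem pexp_eq_subst {u : ℂ⟦X⟧} (hu : constantCoeff u = 0) : pexp u = (exp ℂ).subst u :=
  pcomp_eq_subst hu _

theorem rescale_pexp {u : ℂ⟦X⟧} (hu : constantCoeff u = 0) (r : ℂ) :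
    rescale r (pexp u) = pexp (rescale r u) := by
  rw [pexp_eq_subst hu, rescale_subst hu, pexp_eq_subst (by rwa [constantCoeff_rescale])]

theorem pexp_C_mul (hφ : constantCoeff φ = 0) (a : ℂ) :
    pexp (C a * φ) = (rescale a (exp ℂ)).subst φ := by
  have hφ' := HasSubst.of_constantCoeff_zero' hφ
  rw [pexp_eq_subst (by simp [hφ]), rescale_eq_subst,
    subst_comp_subst_apply (HasSubst.smul_X' a) hφ', subst_smul hφ', subst_X hφ',
    smul_eq_C_mul]

theorem pexp_C_mul_pow (hφ : constantCoeff φ = 0) (a : ℂ) (k : ℕ) :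
    pexp (C a * φ) ^ k = pexp (C (k * a) * φ) := by
  rw [pexp_C_mul hφ, pexp_C_mul hφ, ← subst_pow (HasSubst.of_constantCoeff_zero' hφ),
    ← map_pow, exp_pow_eq_rescale_exp, rescale_rescale, mul_comm]

theorem pexp_C_mul_mul_pexp_C_neg_mul (hφ : constantCoeff φ = 0) (a : ℂ) :
    pexp (C a * φ) * pexp (C (-a) * φ) = 1 := by
  have hφ' := HasSubst.of_constantCoeff_zero' hφ
  rw [pexp_C_mul hφ, pexp_C_mul hφ, ← subst_mul hφ', exp_mul_exp_eq_exp_add, add_neg_cancel,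
    rescale_zero_apply, constantCoeff_exp, map_one, ← coe_substAlgHom hφ', map_one]

end Exponential

theorem statement12_general (φ : PowerSeries ℂ)
    (hφ0 : coeff 0 φ = 0)
    (ν : ℂ)
    (h : PowerSeries ℂ)
    (hh0 : coeff 0 h = 0) (hh1 : coeff 1 h = 1)
    (hinv : pcomp (X * pexp (-φ)) h = X)
    (heq : h = d⁄dX ℂ h * (X * pexp (C (1 / ν) * rescale (-ν) φ))) :
    ∀ n : ℕ,
      (-ν) ^ n * ((n.factorial : ℂ) * coeff n (pexp (C (-(1 / ν)) * φ))) =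
        (n.factorial : ℂ) * coeff n (pexp (C (n : ℂ) * φ)) := by
  intro n
  rw [coeff_zero_eq_constantCoeff_apply] at hφ0 hh0
  have hh := HasSubst.of_constantCoeff_zero' hh0
  obtain ⟨w, hw⟩ := exists_mul_eq_X hh0 hh1
  have hpexp_neg : (pexp (-φ)).subst h = w := by
    refine mul_left_cancel₀ (left_ne_zero_of_mul (by rw [hw]; exact X_ne_zero)) ?_
    rw [hw, ← hinv, pcomp_eq_subst hh0, subst_mul hh, subst_X hh]
  have hwh' : w * d⁄dX ℂ h = rescale (-ν) (pexp (C (-(1 / ν)) * φ)) := by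
    rw [rescale_pexp (by simp [hφ0]), map_mul, rescale_C]
    exact left_inv_eq_right_inv (mul_derivative_mul_eq_one_of_eq_derivative_mul hw heq)
      (pexp_C_mul_mul_pexp_C_neg_mul (by simp [hφ0]) _)
  have hA : (pexp (C (n : ℂ) * φ)).subst h * w ^ n = 1 := by
    rw [← hpexp_neg, ← subst_pow hh, ← subst_mul hh, show -φ = C (-1) * φ by simp,
      pexp_C_mul_pow hφ0, mul_neg_one, pexp_C_mul_mul_pexp_C_neg_mul hφ0, ← coe_substAlgHom hh,
      map_one]
  rw [coeff_eq_coeff_mul_derivative_of_subst_mul_pow_eq_one hh0 hw hA, hwh', coeff_rescale]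
  ring

/-- **Observation 1.6.** Suppose `φ = φ_ν ∈ X + X²ℂ[[X]]` solves
`𝔗Q(X·e^{−φ(X)}) = X·e^{(1/ν)φ(−νX)}`, i.e. the compositional inverse `h` of
`X·exp(−φ)` satisfies `h = h'·X·exp((1/ν)·φ(−νX))`.  If `p_n(α) := n!·coeff_n exp(α·φ)`
are the associated binomial-type polynomials, then for every `n`,
`(−ν)ⁿ·p_n(−1/ν) = p_n(n)`. -/
theorem statement12 (φ : PowerSeries ℂ)
    (hφ0 : coeff 0 φ = 0) (hφ1 : coeff 1 φ = 1)
    (ν : ℂ) (hν : ν ≠ 0)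
    (h : PowerSeries ℂ)
    (hh0 : coeff 0 h = 0) (hh1 : coeff 1 h = 1)
    (hinv : pcomp (X * pexp (-φ)) h = X)
    (heq : h = d⁄dX ℂ h * (X * pexp (C (1 / ν) * rescale (-ν) φ))) :
    ∀ n : ℕ,
      (-ν) ^ n * ((n.factorial : ℂ) * coeff n (pexp (C (-(1 / ν)) * φ))) =
        (n.factorial : ℂ) * coeff n (pexp (C (n : ℂ) * φ)) :=
  statement12_general φ hφ0 ν h hh0 hh1 hinv heq
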